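/- arXiv:2205.08917 — 3 statements merged into one kernel-verified Lean document; each statement's English description precedes it below -/
import Mathlib

section
/- The class of balanced representations of the generalized subspace quiver Γ is closed under extensions: if 0 → L → M → N → 0 is a short exact sequence of representations of Γ with L and N balanced, then M is balanced. -/
/-!
For each cluster `i`, `Ψ(-,i)` is natural in the representation, so a short exact sequence
`0 → L → M → N → 0` gives a morphism from the short exact sequence
`0 → ⊕ L_{ij}^{w_{ij}} → ⊕ M_{ij}^{w_{ij}} → ⊕ N_{ij}^{w_{ij}} → 0` (direct sums of exact sequences
are exact) to `0 → L₀ → M₀ → N₀ → 0`. If the outer components `Ψ(L,i)` and `Ψ(N,i)` are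
bijective, the short five lemma makes `Ψ(M,i)` bijective.
-/

open Finset

/-- A representation of the generalized subspace quiver is balanced if for every cluster `i`
the combined map `Ψ(X,i)` is bijective. -/
def IsBalancedRep (K : Type*) [Field K] {m : ℕ} {r : Fin m → ℕ} (w : ∀ i, Fin (r i) → ℕ)
    {X0 : Type*} [AddCommGroup X0] [Module K X0]
    {X : ∀ i, Fin (r i) → Type*} [∀ i j, AddCommGroup (X i j)] [∀ i j, Module K (X i j)]
    (f : ∀ i j, Fin (w i j) → (X i j →ₗ[K] X0)) : Prop :=
  ∀ i, Function.Bijective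
    (fun g : (j : Fin (r i)) → Fin (w i j) → X i j => ∑ j, ∑ k, f i j k (g j k))

/-- The map `Ψ(X,i)` of one cluster `i`, whose arrows `v_{ij} → v₀` are indexed by `k : κ j`. -/
def clusterMap (R : Type*) [CommRing R] {ι : Type*} [Fintype ι] {κ : ι → Type*}
    [∀ j, Fintype (κ j)] {X0 : Type*} [AddCommGroup X0] [Module R X0] {X : ι → Type*}
    [∀ j, AddCommGroup (X j)] [∀ j, Module R (X j)] (f : ∀ j, κ j → (X j →ₗ[R] X0)) :
    (∀ j, κ j → X j) →ₗ[R] X0 where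
  toFun g := ∑ j, ∑ k, f j k (g j k)
  map_add' g h := by simp only [Pi.add_apply, map_add, sum_add_distrib]
  map_smul' c g := by simp only [Pi.smul_apply, map_smul, smul_sum, RingHom.id_apply]

theorem Function.Exact.piMap {ι : Type*} {A B C : ι → Type*} [∀ i, Zero (C i)]
    {f : ∀ i, A i → B i} {g : ∀ i, B i → C i} (h : ∀ i, Function.Exact (f i) (g i)) :
    Function.Exact (Pi.map f) (Pi.map g) := fun y => by
  simp only [Set.range_piMap, Set.mem_univ_pi, funext_iff, Pi.map_apply, Pi.zero_apply,
    fun i => h i (y i)]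

namespace LinearMap

variable {R : Type*} [CommRing R]
  {M₁ M₂ M₃ N₁ N₂ N₃ : Type*}
  [AddCommGroup M₁] [AddCommGroup M₂] [AddCommGroup M₃] [Module R M₁] [Module R M₂] [Module R M₃]
  [AddCommGroup N₁] [AddCommGroup N₂] [AddCommGroup N₃] [Module R N₁] [Module R N₂] [Module R N₃]

/-- The short five lemma. -/
theorem bijective_of_bijective_of_bijective {f₁ : M₁ →ₗ[R] M₂} {f₂ : M₂ →ₗ[R] M₃}
    {g₁ : N₁ →ₗ[R] N₂} {g₂ : N₂ →ₗ[R] N₃} {i₁ : M₁ →ₗ[R] N₁} {i₂ : M₂ →ₗ[R] N₂}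
    {i₃ : M₃ →ₗ[R] N₃} (hc₁ : g₁ ∘ₗ i₁ = i₂ ∘ₗ f₁) (hc₂ : g₂ ∘ₗ i₂ = i₃ ∘ₗ f₂)
    (hf₁ : Function.Injective f₁) (hf : Function.Exact f₁ f₂) (hf₂ : Function.Surjective f₂)
    (hg₁ : Function.Injective g₁) (hg : Function.Exact g₁ g₂) (hg₂ : Function.Surjective g₂)
    (hi₁ : Function.Bijective i₁) (hi₃ : Function.Bijective i₃) : Function.Bijective i₂ :=
  bijective_of_surjective_of_bijective_of_bijective_of_injective (0 : Unit →ₗ[R] M₁) f₁ f₂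
    (0 : M₃ →ₗ[R] Unit) 0 g₁ g₂ (0 : N₃ →ₗ[R] Unit) 0 i₁ i₂ i₃ 0 (by simp) hc₁ hc₂ (by simp)
    (Function.Exact.of_comp_of_mem_range (funext fun _ => f₁.map_zero)
      fun _ h => ⟨(), (hf₁ (h.trans f₁.map_zero.symm)).symm⟩)
    hf (fun _ => by simpa using hf₂ _)
    (Function.Exact.of_comp_of_mem_range (funext fun _ => g₁.map_zero)
      fun _ h => ⟨(), (hg₁ (h.trans g₁.map_zero.symm)).symm⟩)
    hg (fun _ => by simpa using hg₂ _)
    (fun _ => ⟨(), rfl⟩) hi₁ hi₃ (fun _ _ _ => rfl)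

end LinearMap

section Cluster

open LinearMap

variable {R : Type*} [CommRing R] {ι : Type*} [Fintype ι] {κ : ι → Type*} [∀ j, Fintype (κ j)]
  {L0 M0 N0 : Type*} [AddCommGroup L0] [Module R L0] [AddCommGroup M0] [Module R M0]
  [AddCommGroup N0] [Module R N0] {L M N : ι → Type*}
  [∀ j, AddCommGroup (L j)] [∀ j, Module R (L j)] [∀ j, AddCommGroup (M j)] [∀ j, Module R (M j)]
  [∀ j, AddCommGroup (N j)] [∀ j, Module R (N j)]
  {fL : ∀ j, κ j → (L j →ₗ[R] L0)} {fM : ∀ j, κ j → (M j →ₗ[R] M0)}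
  {fN : ∀ j, κ j → (N j →ₗ[R] N0)}

theorem clusterMap_comp_piMap {φ0 : L0 →ₗ[R] M0} {φ : ∀ j, L j →ₗ[R] M j}
    (hφ : ∀ j k x, fM j k (φ j x) = φ0 (fL j k x)) :
    clusterMap R fM ∘ₗ piMap (fun j => piMap fun _ : κ j => φ j) = φ0 ∘ₗ clusterMap R fL :=
  LinearMap.ext fun g => by simp [clusterMap, hφ, map_sum]

theorem bijective_clusterMap_of_exact {φ0 : L0 →ₗ[R] M0} {φ : ∀ j, L j →ₗ[R] M j}
    {ψ0 : M0 →ₗ[R] N0} {ψ : ∀ j, M j →ₗ[R] N j}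
    (hφ : ∀ j k x, fM j k (φ j x) = φ0 (fL j k x))
    (hψ : ∀ j k x, fN j k (ψ j x) = ψ0 (fM j k x))
    (hφ0 : Function.Injective φ0) (hexact0 : Function.Exact φ0 ψ0)
    (hψ0 : Function.Surjective ψ0) (hφj : ∀ j, Function.Injective (φ j))
    (hexact : ∀ j, Function.Exact (φ j) (ψ j)) (hψj : ∀ j, Function.Surjective (ψ j))
    (hL : Function.Bijective (clusterMap R fL)) (hN : Function.Bijective (clusterMap R fN)) :
    Function.Bijective (clusterMap R fM) := by
  refine bijective_of_bijective_of_bijective (clusterMap_comp_piMap hφ).symm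
    (clusterMap_comp_piMap hψ).symm ?_ ?_ ?_ hφ0 hexact0 hψ0 hL hN
  · simpa only [coe_piMap] using Function.Injective.piMap fun j => Function.Injective.piMap
      fun _ : κ j => hφj j
  · simpa only [coe_piMap] using Function.Exact.piMap fun j => Function.Exact.piMap
      fun _ : κ j => hexact j
  · simpa only [coe_piMap] using Function.Surjective.piMap fun j => Function.Surjective.piMap
      fun _ : κ j => hψj j

end Cluster

/-- Balanced representations are closed under extensions: if `0 → L → M → N → 0` is a short
exact sequence of representations of the generalized subspace quiver with `L` and `N`
balanced, then `M` is balanced. -/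
theorem balanced_closed_under_extensions (K : Type*) [Field K]
    (m : ℕ) (r : Fin m → ℕ) (w : ∀ i, Fin (r i) → ℕ)
    (L0 M0 N0 : Type*) [AddCommGroup L0] [Module K L0] [AddCommGroup M0] [Module K M0]
    [AddCommGroup N0] [Module K N0]
    (L M N : ∀ i, Fin (r i) → Type*)
    [∀ i j, AddCommGroup (L i j)] [∀ i j, Module K (L i j)]
    [∀ i j, AddCommGroup (M i j)] [∀ i j, Module K (M i j)]
    [∀ i j, AddCommGroup (N i j)] [∀ i j, Module K (N i j)]
    (fL : ∀ i j, Fin (w i j) → (L i j →ₗ[K] L0))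
    (fM : ∀ i j, Fin (w i j) → (M i j →ₗ[K] M0))
    (fN : ∀ i j, Fin (w i j) → (N i j →ₗ[K] N0))
    -- the morphism `φ : L → M`
    (φ0 : L0 →ₗ[K] M0) (φ : ∀ i j, L i j →ₗ[K] M i j)
    (hφ : ∀ i j k x, fM i j k (φ i j x) = φ0 (fL i j k x))
    -- the morphism `ψ : M → N`
    (ψ0 : M0 →ₗ[K] N0) (ψ : ∀ i j, M i j →ₗ[K] N i j)
    (hψ : ∀ i j k x, fN i j k (ψ i j x) = ψ0 (fM i j k x))
    -- exactness at every vertex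
    (hexact0 : Function.Injective φ0 ∧ Function.Surjective ψ0 ∧
      LinearMap.range φ0 = LinearMap.ker ψ0)
    (hexact : ∀ i j, Function.Injective (φ i j) ∧ Function.Surjective (ψ i j) ∧
      LinearMap.range (φ i j) = LinearMap.ker (ψ i j))
    (hL : IsBalancedRep K w fL) (hN : IsBalancedRep K w fN) :
    IsBalancedRep K w fM := fun i =>
  bijective_clusterMap_of_exact (hφ i) (hψ i) hexact0.1
    (LinearMap.exact_iff.mpr hexact0.2.2.symm) hexact0.2.1 (fun j => (hexact i j).1)
    (fun j => LinearMap.exact_iff.mpr (hexact i j).2.2.symm) (fun j => (hexact i j).2.1)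
    (hL i) (hN i)
end

section
/- For every balanced dimension vector d of the generalized subspace quiver Γ, there exists a balanced representation M of Γ with dim M = d. Consequently every balanced dimension vector is θ-semistable. -/
/-!
Over each cluster `i`, the space `⊕ⱼ (K^{d_ij})^{w_ij}` has dimension `Σⱼ w_ij d_ij = d₀`, so it
is isomorphic to `K^{d₀}`; composing such an isomorphism `Φᵢ` with the inclusions of the summands
gives arrows whose combined map `Ψ(M,i)` is `Φᵢ` itself. For a subrepresentation `Y`, `Ψ(M,i)`
restricts to an injection `⊕ⱼ Y_ij^{w_ij} → Y₀`, whence `Σⱼ w_ij dim Y_ij ≤ dim Y₀`; summing over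
the `m` clusters gives `θ(dim Y) ≤ 0`.
-/

open Finset Module

section CombinedMap

variable {K : Type*} [Field K] {ι : Type*} [Fintype ι] {κ : ι → Type*} [∀ j, Fintype (κ j)]
  {V : ι → Type*} [∀ j, AddCommGroup (V j)] [∀ j, Module K (V j)]
  {X : Type*} [AddCommGroup X] [Module K X]

/-- The map `Ψ(M,i)` of a single cluster, with arrows `f j k : V j → X`. -/
def combinedMap (f : ∀ j, κ j → (V j →ₗ[K] X)) : (∀ j, κ j → V j) →ₗ[K] X :=
  ∑ j, ∑ k, f j k ∘ₗ LinearMap.proj k ∘ₗ LinearMap.proj j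

theorem combinedMap_apply (f : ∀ j, κ j → (V j →ₗ[K] X)) (g : ∀ j, κ j → V j) :
    combinedMap f g = ∑ j, ∑ k, f j k (g j k) := by
  simp [combinedMap]

theorem combinedMap_comp_single_single [∀ j, DecidableEq (κ j)] [DecidableEq ι]
    (L : (∀ j, κ j → V j) →ₗ[K] X) :
    combinedMap (fun j k => L ∘ₗ LinearMap.single K (fun j => κ j → V j) j
      ∘ₗ LinearMap.single K (fun _ => V j) k) = L := by
  refine LinearMap.ext fun g => ?_
  simp only [combinedMap_apply, LinearMap.comp_apply, ← map_sum]
  simp only [LinearMap.coe_single, Finset.univ_sum_single]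

theorem finrank_pi_pi [∀ j, FiniteDimensional K (V j)] :
    finrank K (∀ j, κ j → V j) = ∑ j, Fintype.card (κ j) * finrank K (V j) := by
  simp [Module.finrank_pi_fintype]

theorem sum_card_mul_finrank_le_of_injective_combinedMap [FiniteDimensional K X]
    [∀ j, FiniteDimensional K (V j)] {f : ∀ j, κ j → (V j →ₗ[K] X)}
    (hf : Function.Injective (combinedMap f)) (Y₀ : Submodule K X) (Y : ∀ j, Submodule K (V j))
    (hY : ∀ j k, ∀ x ∈ Y j, f j k x ∈ Y₀) :
    ∑ j, Fintype.card (κ j) * finrank K (Y j) ≤ finrank K Y₀ := by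
  have hres : Function.Injective (combinedMap fun j k => (f j k).restrict (hY j k)) := by
    intro a b hab
    have hval : (fun j k => (a j k : V j)) = fun j k => (b j k : V j) :=
      hf (by simpa [combinedMap_apply] using congrArg Subtype.val hab)
    funext j k
    exact Subtype.ext (congrFun (congrFun hval j) k)
  rw [← finrank_pi_pi]
  exact LinearMap.finrank_le_finrank_of_injective hres

end CombinedMap

theorem isBalancedRep_iff (K : Type*) [Field K] {m : ℕ} {r : Fin m → ℕ}
    (w : ∀ i, Fin (r i) → ℕ) {X0 : Type*} [AddCommGroup X0] [Module K X0]
    {X : ∀ i, Fin (r i) → Type*} [∀ i j, AddCommGroup (X i j)] [∀ i j, Module K (X i j)]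
    (f : ∀ i j, Fin (w i j) → (X i j →ₗ[K] X0)) :
    IsBalancedRep K w f ↔ ∀ i, Function.Bijective (combinedMap (f i)) := by
  simp only [IsBalancedRep, ← combinedMap_apply]

theorem neg_mul_add_sum_nonpos {m c : ℕ} {a : Fin m → ℕ} (h : ∀ i, a i ≤ c) :
    -(m : ℤ) * c + ∑ i, (a i : ℤ) ≤ 0 := by
  have hsum : ∑ i, (a i : ℤ) ≤ ∑ _i : Fin m, (c : ℤ) :=
    Finset.sum_le_sum fun i _ => by exact_mod_cast h i
  simp only [Finset.sum_const, Finset.card_univ, Fintype.card_fin, nsmul_eq_mul] at hsum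
  linarith

/-- For every balanced dimension vector `d` of the generalized subspace quiver there is a
balanced representation with dimension vector `d`; consequently (King's definition) every
balanced dimension vector is `θ`-semistable: the representation obtained satisfies
`θ(dim) = 0` and `θ(dim Y) ≤ 0` for all subrepresentations `Y`. -/
theorem balanced_dim_vector_realized (K : Type*) [Field K]
    (m : ℕ) (r : Fin m → ℕ) (w : ∀ i, Fin (r i) → ℕ)
    (d0 : ℕ) (d : ∀ i, Fin (r i) → ℕ)
    (hbal : ∀ i, ∑ j, w i j * d i j = d0) :
    ∃ f : ∀ i j, Fin (w i j) → ((Fin (d i j) → K) →ₗ[K] (Fin d0 → K)),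
      IsBalancedRep K w f ∧
      (-(m : ℤ) * (d0 : ℤ) + ∑ i, ∑ j, (w i j : ℤ) * (d i j : ℤ) = 0) ∧
      (∀ (Y0 : Submodule K (Fin d0 → K)) (Y : ∀ i j, Submodule K (Fin (d i j) → K)),
        (∀ i j k, ∀ x ∈ Y i j, f i j k x ∈ Y0) →
        -(m : ℤ) * (finrank K Y0 : ℤ) +
          ∑ i, ∑ j, (w i j : ℤ) * (finrank K (Y i j) : ℤ) ≤ 0) := by
  have hdim : ∀ i, finrank K (∀ j, Fin (w i j) → Fin (d i j) → K) = finrank K (Fin d0 → K) :=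
    fun i => by simp [finrank_pi_pi, ← hbal i]
  have Φ : ∀ i, (∀ j, Fin (w i j) → Fin (d i j) → K) ≃ₗ[K] (Fin d0 → K) :=
    fun i => (FiniteDimensional.nonempty_linearEquiv_of_finrank_eq (hdim i)).some
  let f : ∀ i j, Fin (w i j) → ((Fin (d i j) → K) →ₗ[K] (Fin d0 → K)) := fun i j k =>
    (Φ i).toLinearMap ∘ₗ LinearMap.single K (fun j => Fin (w i j) → Fin (d i j) → K) j
      ∘ₗ LinearMap.single K (fun _ => Fin (d i j) → K) k
  have hΨ : ∀ i, combinedMap (f i) = Φ i := fun i => combinedMap_comp_single_single _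
  refine ⟨f, ?_, ?_, ?_⟩
  · rw [isBalancedRep_iff]
    intro i
    rw [hΨ i]
    exact (Φ i).bijective
  · have hbalℤ : ∀ i, ∑ j, (w i j : ℤ) * (d i j : ℤ) = d0 := fun i => by exact_mod_cast hbal i
    simp only [hbalℤ, Finset.sum_const, Finset.card_univ, Fintype.card_fin, nsmul_eq_mul]
    ring
  · intro Y0 Y hY
    have hcluster : ∀ i, ∑ j, w i j * finrank K (Y i j) ≤ finrank K Y0 := fun i => by
      have hinj : Function.Injective (combinedMap (f i)) := by
        rw [hΨ i]
        exact (Φ i).injective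
      simpa using sum_card_mul_finrank_le_of_injective_combinedMap hinj Y0 (Y i) (hY i)
    exact_mod_cast neg_mul_add_sum_nonpos hcluster
end

section
/- Let d be a balanced vector with minimal conical decomposition d = Σ_{i=1}^r a_i δ_i (a_i > 0 rational, δ_i linearly independent extremal vectors of the balanced cone). Define the graph on {1,…,r} with an edge between i and j (i ≠ j) iff ⟨δ_i, δ_j⟩ ≠ 0. If this graph has no isolated vertex, then it is connected. -/
open Finset

/-- The space of rational vectors indexed by the vertices of the generalized subspace
quiver: the first component is the value at the sink `v₀`, the second gives the values
at the sources `v_{ij}`. -/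
abbrev QVec (m : ℕ) (r : Fin m → ℕ) : Type := ℚ × ((i : Fin m) → Fin (r i) → ℚ)

/-- The extremal vector `δ_u` : value `1` at `v₀`, value `1/w_{i u_i}` at `v_{i u_i}`,
and `0` at all other vertices. -/
def delta {m : ℕ} {r : Fin m → ℕ} (w : ∀ i, Fin (r i) → ℕ) (u : ∀ i, Fin (r i)) :
    QVec m r :=
  (1, fun i j => if j = u i then ((w i (u i) : ℚ))⁻¹ else 0)

/-- A vector is balanced if `Σ_j w_{ij} d_{ij} = d₀` for every cluster `i`. -/
def IsBalancedVec {m : ℕ} {r : Fin m → ℕ} (w : ∀ i, Fin (r i) → ℕ) (x : QVec m r) : Prop :=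
  ∀ i, ∑ j, (w i j : ℚ) * x.2 i j = x.1

/-- The Euler bilinear form of the generalized subspace quiver:
`⟨d, d'⟩ = Σ_v d_v d'_v − Σ_{arrows} d_{source} d'₀`. -/
def euler {m : ℕ} {r : Fin m → ℕ} (w : ∀ i, Fin (r i) → ℕ) (x y : QVec m r) : ℚ :=
  x.1 * y.1 + ∑ i, ∑ j, x.2 i j * y.2 i j - ∑ i, ∑ j, (w i j : ℚ) * x.2 i j * y.1

/-!
For `u ≠ v`, `⟨δ_u, δ_v⟩ = Σ_{u_i = v_i} w_{i u_i}⁻² − (m − 1)` vanishes only if `u` and `v`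
differ in exactly one coordinate `c` and `w_{i u_i} = 1` for all `i ≠ c`. If `p` and `q` lay in
different components, choose neighbours `p'` of `p` and `q'` of `q`: the four cross pairs are
orthogonal, so `p, q, p', q'` is a 4-cycle of such one-coordinate moves. Consecutive moves
change different coordinates (otherwise their ends would be equal or orthogonal), hence opposite
moves change the same coordinate, and comparing coordinatewise gives
`δ_p + δ_{p'} = δ_q + δ_{q'}`, contradicting linear independence.
-/

theorem LinearIndependent.add_ne_add {ι R M : Type*} [Semiring R] [Nontrivial R]
    [AddCommMonoid M] [Module R M] {v : ι → M} (hv : LinearIndependent R v) {i j k l : ι}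
    (hij : i ≠ j) (hik : i ≠ k) (hil : i ≠ l) : v i + v j ≠ v k + v l := by
  intro h
  have hcomb : Finsupp.single i (1 : R) + Finsupp.single j 1 =
      Finsupp.single k 1 + Finsupp.single l 1 :=
    hv (by simpa [Finsupp.linearCombination_single] using h)
  simpa [Finsupp.single_apply, hij.symm, hik.symm, hil.symm] using
    DFunLike.congr_fun hcomb i

section SubspaceQuiver

variable {m : ℕ} {r : Fin m → ℕ} {w : ∀ i, Fin (r i) → ℕ}

lemma euler_delta_delta (hw : ∀ i j, 0 < w i j) (u v : ∀ i, Fin (r i)) :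
    euler w (delta w u) (delta w v) =
      ∑ i, (if u i = v i then ((w i (u i) : ℚ)⁻¹) ^ 2 else 0) - (m - 1) := by
  have hdiag : ∀ i, ∑ j, (delta w u).2 i j * (delta w v).2 i j =
      if u i = v i then ((w i (u i) : ℚ)⁻¹) ^ 2 else 0 := by
    intro i
    by_cases h : u i = v i
    · simp [delta, h, sq]
    · simp [delta, ite_mul, h, Ne.symm h]
  have hsink : ∀ i, ∑ j, (w i j : ℚ) * (delta w u).2 i j * (delta w v).1 = 1 := by
    intro i
    have : (w i (u i) : ℚ) ≠ 0 := by exact_mod_cast (hw i (u i)).ne'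
    simp [delta, this]
  simp only [euler, hdiag, hsink, sum_const, card_univ, Fintype.card_fin, nsmul_eq_mul]
  simp [delta]
  ring

lemma euler_delta_delta_comm (hw : ∀ i j, 0 < w i j) (u v : ∀ i, Fin (r i)) :
    euler w (delta w u) (delta w v) = euler w (delta w v) (delta w u) := by
  simp only [euler_delta_delta hw]
  congr 1
  refine sum_congr rfl fun i _ => ?_
  by_cases h : u i = v i <;> simp [h, eq_comm]

lemma delta_add_delta_eq {a b c d : ∀ i, Fin (r i)}
    (h : ∀ i, (a i = c i ∧ b i = d i) ∨ (a i = d i ∧ b i = c i)) :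
    delta w a + delta w b = delta w c + delta w d := by
  refine Prod.ext rfl (funext fun i => funext fun j => ?_)
  simp only [delta, Prod.snd_add, Pi.add_apply]
  rcases h i with ⟨hc, hd⟩ | ⟨hd, hc⟩
  · rw [hc, hd]
  · rw [hc, hd, add_comm]

def OrthAt (w : ∀ i, Fin (r i) → ℕ) (c : Fin m) (u v : ∀ i, Fin (r i)) : Prop :=
  u c ≠ v c ∧ ∀ i ≠ c, u i = v i ∧ w i (u i) = 1

lemma OrthAt.symm {c : Fin m} {u v : ∀ i, Fin (r i)} (h : OrthAt w c u v) : OrthAt w c v u :=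
  ⟨h.1.symm, fun i hi => ⟨(h.2 i hi).1.symm, (h.2 i hi).1 ▸ (h.2 i hi).2⟩⟩

lemma exists_orthAt_of_euler_eq_zero (hw : ∀ i j, 0 < w i j) {u v : ∀ i, Fin (r i)}
    (hne : u ≠ v) (h : euler w (delta w u) (delta w v) = 0) : ∃ c, OrthAt w c u v := by
  obtain ⟨c, hc⟩ := Function.ne_iff.mp hne
  set t : Fin m → ℚ := fun i => if u i = v i then ((w i (u i) : ℚ)⁻¹) ^ 2 else 0 with ht
  have ht_le : ∀ i, t i ≤ 1 := fun i => by
    by_cases hi : u i = v i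
    · have : (1 : ℚ) ≤ w i (u i) := by exact_mod_cast hw i (u i)
      simpa [ht, hi] using pow_le_one₀ (by positivity) (inv_le_one_of_one_le₀ this)
    · simp [ht, hi]
  -- `⟨δ_u, δ_v⟩ = 0` says that the defects `1 - t i ≥ 0` sum to `1`, and `1 - t c = 1`.
  have hdefect : ∑ i ∈ univ.erase c, (1 - t i) = 0 := by
    rw [euler_delta_delta hw] at h
    have hsum : ∑ i, (1 - t i) = 1 := by
      simp only [sum_sub_distrib, sum_const, card_univ, Fintype.card_fin, nsmul_eq_mul, mul_one]
      linarith
    rw [← add_sum_erase _ _ (mem_univ c)] at hsum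
    simpa [ht, hc] using hsum
  have hone := (sum_eq_zero_iff_of_nonneg fun i _ => sub_nonneg.2 (ht_le i)).1 hdefect
  refine ⟨c, hc, fun i hi => ?_⟩
  have hti : t i = 1 := by linarith [hone i (mem_erase.2 ⟨hi, mem_univ i⟩)]
  by_cases hui : u i = v i
  · refine ⟨hui, ?_⟩
    simp only [ht, if_pos hui, inv_pow, inv_eq_one] at hti
    exact_mod_cast (pow_eq_one_iff_of_nonneg (Nat.cast_nonneg _) two_ne_zero).1 hti
  · simp [ht, hui] at hti

lemma euler_eq_zero_of_orthAt (hw : ∀ i j, 0 < w i j) {c : Fin m} {u v : ∀ i, Fin (r i)}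
    (h : OrthAt w c u v) : euler w (delta w u) (delta w v) = 0 := by
  have hterm : ∀ i ∈ univ.erase c,
      (if u i = v i then ((w i (u i) : ℚ)⁻¹) ^ 2 else 0) = 1 := fun i hi => by
    obtain ⟨hui, hwi⟩ := h.2 i (ne_of_mem_erase hi)
    rw [if_pos hui, hwi]
    norm_num
  rw [euler_delta_delta hw, ← add_sum_erase _ _ (mem_univ c), if_neg h.1, zero_add,
    sum_congr rfl hterm, sum_erase_eq_sub (mem_univ c)]
  simp

lemma OrthAt.ne_of_orthAt (hw : ∀ i j, 0 < w i j) {a b : Fin m} {x y z : ∀ i, Fin (r i)}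
    (hxy : OrthAt w a x y) (hyz : OrthAt w b y z) (hxz : x ≠ z)
    (h : euler w (delta w x) (delta w z) ≠ 0) : a ≠ b := by
  rintro rfl
  have hagree : ∀ i ≠ a, x i = z i := fun i hi => (hxy.2 i hi).1.trans (hyz.2 i hi).1
  have hxa : x a ≠ z a := fun hxa =>
    hxz (funext fun i => if hi : i = a then hi ▸ hxa else hagree i hi)
  exact h (euler_eq_zero_of_orthAt hw
    ⟨hxa, fun i hi => ⟨hagree i hi, (hxy.2 i hi).1 ▸ (hxy.2 i hi).2⟩⟩)

/-- Coordinate `b` changes along `x₁ → x₂`, so another move of the cycle changes it back. -/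
lemma OrthAt.label_eq_of_cycle {a b c d : Fin m} {x₀ x₁ x₂ x₃ : ∀ i, Fin (r i)}
    (h₀ : OrthAt w a x₀ x₁) (h₁ : OrthAt w b x₁ x₂) (h₂ : OrthAt w c x₂ x₃)
    (h₃ : OrthAt w d x₃ x₀) (hab : a ≠ b) (hcb : c ≠ b) : d = b := by
  by_contra hdb
  exact h₁.1 ((h₀.2 b hab.symm).1.symm.trans
    ((h₃.2 b (Ne.symm hdb)).1.symm.trans (h₂.2 b hcb.symm).1.symm))

theorem delta_add_delta_eq_of_euler_eq_zero (hw : ∀ i j, 0 < w i j)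
    {p p' q q' : ∀ i, Fin (r i)} (hpp' : p ≠ p') (hqq' : q ≠ q')
    (hpq : p ≠ q) (hpq' : p ≠ q') (hp'q : p' ≠ q) (hp'q' : p' ≠ q')
    (hp : euler w (delta w p) (delta w p') ≠ 0) (hq : euler w (delta w q) (delta w q') ≠ 0)
    (opq : euler w (delta w p) (delta w q) = 0) (opq' : euler w (delta w p) (delta w q') = 0)
    (op'q : euler w (delta w p') (delta w q) = 0)
    (op'q' : euler w (delta w p') (delta w q') = 0) :
    delta w p + delta w p' = delta w q + delta w q' := by
  obtain ⟨a, ha⟩ := exists_orthAt_of_euler_eq_zero hw hpq opq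
  obtain ⟨b, hb⟩ := exists_orthAt_of_euler_eq_zero hw hp'q op'q
  obtain ⟨c, hc⟩ := exists_orthAt_of_euler_eq_zero hw hp'q' op'q'
  obtain ⟨d, hd⟩ := exists_orthAt_of_euler_eq_zero hw hpq' opq'
  -- the cycle `p —a— q —b— p' —c— q' —d— p`
  have hab : a ≠ b := ha.ne_of_orthAt hw hb.symm hpp' hp
  have hbc : b ≠ c := hb.symm.ne_of_orthAt hw hc hqq' hq
  have hcd : c ≠ d := hc.ne_of_orthAt hw hd.symm hpp'.symm
    (by rwa [euler_delta_delta_comm hw])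
  have hda : d ≠ a := hd.symm.ne_of_orthAt hw ha hqq'.symm
    (by rwa [euler_delta_delta_comm hw])
  obtain rfl : d = b := OrthAt.label_eq_of_cycle ha hb.symm hc hd.symm hab hbc.symm
  obtain rfl : a = c := OrthAt.label_eq_of_cycle hb.symm hc hd.symm ha hbc hcd.symm
  refine delta_add_delta_eq fun i => ?_
  by_cases hi : i = a
  · subst hi
    exact .inr ⟨(hd.2 _ hab).1, (hb.2 _ hab).1⟩
  · exact .inl ⟨(ha.2 i hi).1, (hc.2 i hi).1⟩

end SubspaceQuiver

theorem no_isolated_vertex_connected_general {m : ℕ} {r : Fin m → ℕ}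
    (w : ∀ i, Fin (r i) → ℕ) (hw : ∀ i j, 0 < w i j)
    (s : ℕ) (δ : Fin s → (∀ i, Fin (r i)))
    (hli : LinearIndependent ℚ (fun i => delta w (δ i)))
    (hniso : ∀ i : Fin s, ∃ j, i ≠ j ∧ euler w (delta w (δ i)) (delta w (δ j)) ≠ 0) :
    ∀ p q : Fin s, Relation.ReflTransGen
      (fun i j => i ≠ j ∧ euler w (delta w (δ i)) (delta w (δ j)) ≠ 0) p q := by
  intro p q
  by_contra hdisc
  set R : Fin s → Fin s → Prop :=
    fun i j => i ≠ j ∧ euler w (delta w (δ i)) (delta w (δ j)) ≠ 0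
  obtain ⟨p', hpp', hp⟩ := hniso p
  obtain ⟨q', hqq', hq⟩ := hniso q
  have hp' : Relation.ReflTransGen R p p' := .single ⟨hpp', hp⟩
  have hq' : Relation.ReflTransGen R q' q :=
    .single ⟨hqq'.symm, by rwa [euler_delta_delta_comm hw]⟩
  have cross : ∀ x y, Relation.ReflTransGen R p x → Relation.ReflTransGen R y q →
      x ≠ y ∧ euler w (delta w (δ x)) (delta w (δ y)) = 0 := fun x y hx hy => by
    have hxy : x ≠ y := by rintro rfl; exact hdisc (hx.trans hy)
    exact ⟨hxy, not_not.1 fun h => hdisc (hx.trans (.head ⟨hxy, h⟩ hy))⟩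
  obtain ⟨hpq, opq⟩ := cross p q .refl .refl
  obtain ⟨hpq', opq'⟩ := cross p q' .refl hq'
  obtain ⟨hp'q, op'q⟩ := cross p' q hp' .refl
  obtain ⟨hp'q', op'q'⟩ := cross p' q' hp' hq'
  have hδ : ∀ {x y : Fin s}, x ≠ y → δ x ≠ δ y := fun h =>
    ne_of_apply_ne (delta w) (hli.injective.ne h)
  exact hli.add_ne_add hpp' hpq hpq' <| delta_add_delta_eq_of_euler_eq_zero hw
    (hδ hpp') (hδ hqq') (hδ hpq) (hδ hpq') (hδ hp'q) (hδ hp'q') hp hq opq opq' op'q op'q'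

/-- Let `d = Σ a_i δ_i` be a minimal conical decomposition of a balanced vector, and put
an edge between `i ≠ j` iff `⟨δ_i, δ_j⟩ ≠ 0`. If this graph has no isolated vertex, then
it is connected. -/
theorem no_isolated_vertex_connected {m : ℕ} {r : Fin m → ℕ}
    (w : ∀ i, Fin (r i) → ℕ) (hw : ∀ i j, 0 < w i j)
    (s : ℕ) (δ : Fin s → (∀ i, Fin (r i))) (a : Fin s → ℚ)
    (ha : ∀ i, 0 < a i)
    (hli : LinearIndependent ℚ (fun i => delta w (δ i)))
    (d : QVec m r) (hd : d = ∑ i, a i • delta w (δ i))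
    (hdbal : IsBalancedVec w d)
    (hniso : ∀ i : Fin s, ∃ j, i ≠ j ∧ euler w (delta w (δ i)) (delta w (δ j)) ≠ 0) :
    ∀ p q : Fin s, Relation.ReflTransGen
      (fun i j => i ≠ j ∧ euler w (delta w (δ i)) (delta w (δ j)) ≠ 0) p q :=
  no_isolated_vertex_connected_general w hw s δ hli hniso
end
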